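/- arXiv:2408.15773 — 8 statements merged into one kernel-verified Lean document; each statement's English description precedes it below -/
import Mathlib

section
/- Let L : ℝ³ → ℝ be C² (arguments written (q, v, t)), let q : ℝ → ℝ be C², and let ξ, δq, Ψ : ℝ → ℝ be C¹ functions of time. Suppose the Noether–Bessel-Hagen equation holds along the trajectory: (∂L/∂t)·ξ(t) + (∂L/∂q)·δq(t) + (∂L/∂v)·(δq'(t) − q̇(t)·ξ'(t)) + L·ξ'(t) = Ψ'(t), where all partial derivatives of L are evaluated at (q(t), q̇(t), t). Define the Noether charge N(t) = Ψ(t) + [(∂L/∂v)·q̇(t) − L]·ξ(t) − (∂L/∂v)·δq(t). Then for every t, N'(t) = (δq(t) − ξ(t)·q̇(t)) · [ (∂L/∂q) − d/dt((∂L/∂v)(q(t), q̇(t), t)) ]. -/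
/-!
Differentiating the charge by the product rule and expanding `d/dt L(q, q̇, t)` by the chain
rule into `q̇ ∂L/∂q + q̈ ∂L/∂v + ∂L/∂t`, the `q̈` terms cancel, and substituting `Ψ'` from the
Noether–Bessel-Hagen equation cancels every term containing `ξ'`, `δq'` or `∂L/∂t`. What is left
is `(δq − ξ q̇)(∂L/∂q − d/dt ∂L/∂v)`.
-/

section PartialDerivatives

variable {L : ℝ → ℝ → ℝ → ℝ}

theorem hasDerivAt_comp_curve_fderiv {a b c : ℝ → ℝ} {a' b' c' t : ℝ}
    (hL : DifferentiableAt ℝ (fun x : ℝ × ℝ × ℝ => L x.1 x.2.1 x.2.2) (a t, b t, c t))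
    (ha : HasDerivAt a a' t) (hb : HasDerivAt b b' t) (hc : HasDerivAt c c' t) :
    HasDerivAt (fun s => L (a s) (b s) (c s))
      (fderiv ℝ (fun x : ℝ × ℝ × ℝ => L x.1 x.2.1 x.2.2) (a t, b t, c t) (a', b', c')) t :=
  hL.hasFDerivAt.comp_hasDerivAt (f := fun s => (a s, b s, c s)) t (ha.prodMk (hb.prodMk hc))

theorem deriv_partial_fst_eq_fderiv {x v s : ℝ}
    (hL : DifferentiableAt ℝ (fun x : ℝ × ℝ × ℝ => L x.1 x.2.1 x.2.2) (x, v, s)) :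
    deriv (fun x' => L x' v s) x
      = fderiv ℝ (fun x : ℝ × ℝ × ℝ => L x.1 x.2.1 x.2.2) (x, v, s) (1, 0, 0) :=
  (hasDerivAt_comp_curve_fderiv hL (hasDerivAt_id' x) (hasDerivAt_const x v)
    (hasDerivAt_const x s)).deriv

theorem deriv_partial_snd_eq_fderiv {x v s : ℝ}
    (hL : DifferentiableAt ℝ (fun x : ℝ × ℝ × ℝ => L x.1 x.2.1 x.2.2) (x, v, s)) :
    deriv (fun v' => L x v' s) v
      = fderiv ℝ (fun x : ℝ × ℝ × ℝ => L x.1 x.2.1 x.2.2) (x, v, s) (0, 1, 0) :=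
  (hasDerivAt_comp_curve_fderiv hL (hasDerivAt_const v x) (hasDerivAt_id' v)
    (hasDerivAt_const v s)).deriv

theorem deriv_partial_thd_eq_fderiv {x v s : ℝ}
    (hL : DifferentiableAt ℝ (fun x : ℝ × ℝ × ℝ => L x.1 x.2.1 x.2.2) (x, v, s)) :
    deriv (fun s' => L x v s') s
      = fderiv ℝ (fun x : ℝ × ℝ × ℝ => L x.1 x.2.1 x.2.2) (x, v, s) (0, 0, 1) :=
  (hasDerivAt_comp_curve_fderiv hL (hasDerivAt_const s x) (hasDerivAt_const s v)
    (hasDerivAt_id' s)).deriv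

theorem hasDerivAt_comp_curve {a b c : ℝ → ℝ} {a' b' c' t : ℝ}
    (hL : DifferentiableAt ℝ (fun x : ℝ × ℝ × ℝ => L x.1 x.2.1 x.2.2) (a t, b t, c t))
    (ha : HasDerivAt a a' t) (hb : HasDerivAt b b' t) (hc : HasDerivAt c c' t) :
    HasDerivAt (fun s => L (a s) (b s) (c s))
      (a' * deriv (fun x => L x (b t) (c t)) (a t)
        + b' * deriv (fun v => L (a t) v (c t)) (b t)
        + c' * deriv (fun s => L (a t) (b t) s) (c t)) t := by
  convert hasDerivAt_comp_curve_fderiv hL ha hb hc using 1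
  have hsplit : ((a', b', c') : ℝ × ℝ × ℝ)
      = a' • ((1 : ℝ), (0 : ℝ), (0 : ℝ)) + b' • ((0 : ℝ), (1 : ℝ), (0 : ℝ))
        + c' • ((0 : ℝ), (0 : ℝ), (1 : ℝ)) := by
    simp
  rw [hsplit, map_add, map_add, map_smul, map_smul, map_smul, smul_eq_mul, smul_eq_mul,
    smul_eq_mul, deriv_partial_fst_eq_fderiv hL, deriv_partial_snd_eq_fderiv hL,
    deriv_partial_thd_eq_fderiv hL]

theorem differentiable_deriv_partial_snd_comp_curve {a b c : ℝ → ℝ}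
    (hL : ContDiff ℝ 2 (fun x : ℝ × ℝ × ℝ => L x.1 x.2.1 x.2.2))
    (ha : Differentiable ℝ a) (hb : Differentiable ℝ b) (hc : Differentiable ℝ c) :
    Differentiable ℝ (fun s => deriv (fun v => L (a s) v (c s)) (b s)) := by
  have hLd : Differentiable ℝ (fun x : ℝ × ℝ × ℝ => L x.1 x.2.1 x.2.2) :=
    hL.differentiable two_ne_zero
  have hDL : Differentiable ℝ (fderiv ℝ (fun x : ℝ × ℝ × ℝ => L x.1 x.2.1 x.2.2)) :=
    (hL.fderiv_right (by norm_num)).differentiable one_ne_zero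
  simp_rw [deriv_partial_snd_eq_fderiv (hLd _)]
  exact (hDL.comp (ha.prodMk (hb.prodMk hc))).clm_apply (differentiable_const _)

end PartialDerivatives

/-- Noether's theorem (off shell, Lagrangian form): if the Noether–Bessel-Hagen
equation holds along the trajectory, then the Noether charge
`N = Ψ + (∂L/∂v · q̇ − L)·ξ − ∂L/∂v · δq` satisfies
`N' = (δq − ξ·q̇)·(∂L/∂q − d/dt(∂L/∂v))`. -/
theorem stmt_3
    (L : ℝ → ℝ → ℝ → ℝ)
    (hL : ContDiff ℝ 2 (fun x : ℝ × ℝ × ℝ => L x.1 x.2.1 x.2.2))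
    (q : ℝ → ℝ) (hq : ContDiff ℝ 2 q)
    (ξ δq Ψ : ℝ → ℝ)
    (hξ : ContDiff ℝ 1 ξ) (hδq : ContDiff ℝ 1 δq) (hΨ : ContDiff ℝ 1 Ψ)
    (hNBH : ∀ t : ℝ,
      deriv (fun s => L (q t) (deriv q t) s) t * ξ t
      + deriv (fun x => L x (deriv q t) t) (q t) * δq t
      + deriv (fun v => L (q t) v t) (deriv q t)
          * (deriv δq t - deriv q t * deriv ξ t)
      + L (q t) (deriv q t) t * deriv ξ t
      = deriv Ψ t)
    (N : ℝ → ℝ)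
    (hN : N = fun t => Ψ t
      + (deriv (fun v => L (q t) v t) (deriv q t) * deriv q t
          - L (q t) (deriv q t) t) * ξ t
      - deriv (fun v => L (q t) v t) (deriv q t) * δq t) :
    ∀ t : ℝ, deriv N t
      = (δq t - ξ t * deriv q t)
        * (deriv (fun x => L x (deriv q t) t) (q t)
            - deriv (fun s => deriv (fun v => L (q s) v s) (deriv q s)) t) := by
  intro t
  have hq₁ : Differentiable ℝ q := hq.differentiable two_ne_zero
  have hq₂ : Differentiable ℝ (deriv q) :=
    (hq.iterate_deriv' 1 1).differentiable one_ne_zero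
  have hp :=
    (differentiable_deriv_partial_snd_comp_curve hL hq₁ hq₂ differentiable_fun_id t).hasDerivAt
  have hLt := hasDerivAt_comp_curve (hL.differentiable two_ne_zero _)
    (hq₁ t).hasDerivAt (hq₂ t).hasDerivAt (hasDerivAt_id' t)
  have hNt := ((hΨ.differentiable one_ne_zero t).hasDerivAt.fun_add
    (((hp.fun_mul (hq₂ t).hasDerivAt).fun_sub hLt).fun_mul
      (hξ.differentiable one_ne_zero t).hasDerivAt)).fun_sub
    (hp.fun_mul (hδq.differentiable one_ne_zero t).hasDerivAt)
  subst hN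
  rw [hNt.deriv]
  linear_combination -(hNBH t)
end

section
/- Let L : ℝ³ → ℝ be C² (arguments written (q, v, t)), let q : ℝ → ℝ be C², and let ξ, δq, Ψ : ℝ → ℝ be C¹. Suppose both (i) the Noether–Bessel-Hagen equation holds along the trajectory: (∂L/∂t)·ξ(t) + (∂L/∂q)·δq(t) + (∂L/∂v)·(δq'(t) − q̇(t)·ξ'(t)) + L·ξ'(t) = Ψ'(t), and (ii) the trajectory is on shell, i.e. it satisfies the Euler–Lagrange equation d/dt[(∂L/∂v)(q(t), q̇(t), t)] = (∂L/∂q)(q(t), q̇(t), t) for all t. Then the Noether charge N(t) = Ψ(t) + [(∂L/∂v)·q̇(t) − L]·ξ(t) − (∂L/∂v)·δq(t) is constant in t. -/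
/-!
Along any trajectory, differentiating the charge and using the chain rule for `L (q, q̇, t)` gives
the off-shell identity
`N' = (Ψ' - NBH) + (d/dt ∂L/∂v - ∂L/∂q) · (q̇ ξ - δq)`,
where `NBH` is the left-hand side of the Noether–Bessel-Hagen equation. Under the quasisymmetry
and the Euler–Lagrange equation both brackets vanish, so `N' ≡ 0` and `N` is constant. `L ∈ C²`
is what makes the momentum `∂L/∂v` differentiable along the trajectory.
-/

noncomputable section

namespace Noether

variable {L : ℝ → ℝ → ℝ → ℝ}

theorem hasDerivAt_comp₃ {x y z : ℝ → ℝ} {x' y' z' t : ℝ}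
    (hL : DifferentiableAt ℝ (fun p : ℝ × ℝ × ℝ => L p.1 p.2.1 p.2.2) (x t, y t, z t))
    (hx : HasDerivAt x x' t) (hy : HasDerivAt y y' t) (hz : HasDerivAt z z' t) :
    HasDerivAt (fun s => L (x s) (y s) (z s))
      (fderiv ℝ (fun p : ℝ × ℝ × ℝ => L p.1 p.2.1 p.2.2) (x t, y t, z t) (x', y', z')) t :=
  hL.hasFDerivAt.comp_hasDerivAt (l := fun p : ℝ × ℝ × ℝ => L p.1 p.2.1 p.2.2) t
    (hx.prodMk (hy.prodMk hz))

variable {a b c : ℝ}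

theorem deriv_slice₁
    (hL : DifferentiableAt ℝ (fun p : ℝ × ℝ × ℝ => L p.1 p.2.1 p.2.2) (a, b, c)) :
    deriv (fun x => L x b c) a
      = fderiv ℝ (fun p : ℝ × ℝ × ℝ => L p.1 p.2.1 p.2.2) (a, b, c) (1, 0, 0) :=
  (hasDerivAt_comp₃ (x := id) hL (hasDerivAt_id a) (hasDerivAt_const a b)
    (hasDerivAt_const a c)).deriv

theorem deriv_slice₂
    (hL : DifferentiableAt ℝ (fun p : ℝ × ℝ × ℝ => L p.1 p.2.1 p.2.2) (a, b, c)) :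
    deriv (fun y => L a y c) b
      = fderiv ℝ (fun p : ℝ × ℝ × ℝ => L p.1 p.2.1 p.2.2) (a, b, c) (0, 1, 0) :=
  (hasDerivAt_comp₃ (y := id) hL (hasDerivAt_const b a) (hasDerivAt_id b)
    (hasDerivAt_const b c)).deriv

theorem deriv_slice₃
    (hL : DifferentiableAt ℝ (fun p : ℝ × ℝ × ℝ => L p.1 p.2.1 p.2.2) (a, b, c)) :
    deriv (fun z => L a b z) c
      = fderiv ℝ (fun p : ℝ × ℝ × ℝ => L p.1 p.2.1 p.2.2) (a, b, c) (0, 0, 1) :=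
  (hasDerivAt_comp₃ (z := id) hL (hasDerivAt_const c a) (hasDerivAt_const c b)
    (hasDerivAt_id c)).deriv

theorem hasDerivAt_comp₃_partialDerivs {x y z : ℝ → ℝ} {x' y' z' t : ℝ}
    (hL : DifferentiableAt ℝ (fun p : ℝ × ℝ × ℝ => L p.1 p.2.1 p.2.2) (x t, y t, z t))
    (hx : HasDerivAt x x' t) (hy : HasDerivAt y y' t) (hz : HasDerivAt z z' t) :
    HasDerivAt (fun s => L (x s) (y s) (z s))
      (deriv (fun a => L a (y t) (z t)) (x t) * x' + deriv (fun b => L (x t) b (z t)) (y t) * y'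
        + deriv (fun c => L (x t) (y t) c) (z t) * z') t := by
  convert hasDerivAt_comp₃ hL hx hy hz using 1
  have hsplit : ((x', y', z') : ℝ × ℝ × ℝ)
      = x' • ((1 : ℝ), (0 : ℝ), (0 : ℝ)) + y' • ((0 : ℝ), (1 : ℝ), (0 : ℝ))
        + z' • ((0 : ℝ), (0 : ℝ), (1 : ℝ)) := by
    simp
  rw [hsplit, map_add, map_add, map_smul, map_smul, map_smul, deriv_slice₁ hL, deriv_slice₂ hL,
    deriv_slice₃ hL, smul_eq_mul, smul_eq_mul, smul_eq_mul]
  ring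

variable (L) (q ξ δq Ψ : ℝ → ℝ) (t : ℝ)

def momentum : ℝ := deriv (fun v => L (q t) v t) (deriv q t)

def generalizedForce : ℝ := deriv (fun x => L x (deriv q t) t) (q t)

def energy : ℝ := momentum L q t * deriv q t - L (q t) (deriv q t) t

def noetherCharge : ℝ := Ψ t + energy L q t * ξ t - momentum L q t * δq t

/-- The left-hand side of the Noether–Bessel-Hagen equation. -/
def besselHagenVariation : ℝ :=
  deriv (fun s => L (q t) (deriv q t) s) t * ξ t + generalizedForce L q t * δq t
    + momentum L q t * (deriv δq t - deriv q t * deriv ξ t) + L (q t) (deriv q t) t * deriv ξ t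

variable {L q ξ δq Ψ t}

theorem differentiable_momentum
    (hL : ContDiff ℝ 2 (fun p : ℝ × ℝ × ℝ => L p.1 p.2.1 p.2.2)) (hq : ContDiff ℝ 2 q) :
    Differentiable ℝ (momentum L q) := by
  have hγ : ContDiff ℝ 1 (fun s => ((q s, deriv q s, s) : ℝ × ℝ × ℝ)) :=
    (hq.of_le one_le_two).prodMk ((hq.deriv' (n := 1)).prodMk contDiff_id)
  have hp : momentum L q = fun s => fderiv ℝ (fun p : ℝ × ℝ × ℝ => L p.1 p.2.1 p.2.2)
      (q s, deriv q s, s) (0, 1, 0) :=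
    funext fun s => deriv_slice₂ (hL.differentiable two_ne_zero _)
  rw [hp]
  exact (((hL.fderiv_right one_add_one_eq_two.le).clm_apply contDiff_const).comp hγ).differentiable
    one_ne_zero

theorem hasDerivAt_noetherCharge
    (hL : ContDiff ℝ 2 (fun p : ℝ × ℝ × ℝ => L p.1 p.2.1 p.2.2)) (hq : ContDiff ℝ 2 q)
    (hξ : DifferentiableAt ℝ ξ t) (hδq : DifferentiableAt ℝ δq t)
    (hΨ : DifferentiableAt ℝ Ψ t) :
    HasDerivAt (noetherCharge L q ξ δq Ψ)
      (deriv Ψ t - besselHagenVariation L q ξ δq t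
        + (deriv (momentum L q) t - generalizedForce L q t) * (deriv q t * ξ t - δq t)) t := by
  have hv : HasDerivAt (deriv q) (deriv (deriv q) t) t :=
    (hq.differentiable_deriv_two t).hasDerivAt
  have hLag := hasDerivAt_comp₃_partialDerivs (hL.differentiable two_ne_zero _)
    (hq.differentiable two_ne_zero t).hasDerivAt hv (hasDerivAt_id t)
  have hp := (differentiable_momentum hL hq t).hasDerivAt
  refine ((hΨ.hasDerivAt.add (((hp.mul hv).sub hLag).mul hξ.hasDerivAt)).sub
    (hp.mul hδq.hasDerivAt)).congr_deriv ?_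
  simp only [besselHagenVariation, generalizedForce, momentum, id, Pi.mul_apply, Pi.sub_apply]
  ring

end Noether

end

open Noether in
/-- Noether's theorem (on shell): if the Noether–Bessel-Hagen equation holds and
the trajectory satisfies the Euler–Lagrange equation, then the Noether charge
`N = Ψ + (∂L/∂v · q̇ − L)·ξ − ∂L/∂v · δq` is constant in time. -/
theorem stmt_4
    (L : ℝ → ℝ → ℝ → ℝ)
    (hL : ContDiff ℝ 2 (fun x : ℝ × ℝ × ℝ => L x.1 x.2.1 x.2.2))
    (q : ℝ → ℝ) (hq : ContDiff ℝ 2 q)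
    (ξ δq Ψ : ℝ → ℝ)
    (hξ : ContDiff ℝ 1 ξ) (hδq : ContDiff ℝ 1 δq) (hΨ : ContDiff ℝ 1 Ψ)
    (hNBH : ∀ t : ℝ,
      deriv (fun s => L (q t) (deriv q t) s) t * ξ t
      + deriv (fun x => L x (deriv q t) t) (q t) * δq t
      + deriv (fun v => L (q t) v t) (deriv q t)
          * (deriv δq t - deriv q t * deriv ξ t)
      + L (q t) (deriv q t) t * deriv ξ t
      = deriv Ψ t)
    (hEL : ∀ t : ℝ,
      deriv (fun s => deriv (fun v => L (q s) v s) (deriv q s)) t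
        = deriv (fun x => L x (deriv q t) t) (q t))
    (N : ℝ → ℝ)
    (hN : N = fun t => Ψ t
      + (deriv (fun v => L (q t) v t) (deriv q t) * deriv q t
          - L (q t) (deriv q t) t) * ξ t
      - deriv (fun v => L (q t) v t) (deriv q t) * δq t) :
    ∀ t₁ t₂ : ℝ, N t₁ = N t₂ := by
  subst hN
  have hN' : ∀ t, HasDerivAt (noetherCharge L q ξ δq Ψ) 0 t := fun t => by
    have hNBH' : besselHagenVariation L q ξ δq t = deriv Ψ t := hNBH t
    have hEL' : deriv (momentum L q) t = generalizedForce L q t := hEL t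
    have h := hasDerivAt_noetherCharge hL hq (hξ.differentiable one_ne_zero t)
      (hδq.differentiable one_ne_zero t) (hΨ.differentiable one_ne_zero t)
    rwa [hNBH', hEL', sub_self, sub_self, zero_mul, add_zero] at h
  exact is_const_of_deriv_eq_zero (fun t => (hN' t).differentiableAt) (fun t => (hN' t).deriv)
end

section
/- Let L, ξ, δq, Ψ : ℝ³ → ℝ be C¹ (arguments written (q, v, t)). Then the following are equivalent: (I) for every C² curve q : ℝ → ℝ and every t, the Noether–Bessel-Hagen equation holds along the curve, where total time derivatives of ξ, δq, Ψ along the curve are D_t f = ∂f/∂t + (∂f/∂q)·q̇ + (∂f/∂v)·q̈ evaluated at (q(t), q̇(t), t): (∂L/∂t)·ξ + (∂L/∂q)·δq + (∂L/∂v)·(D_t δq − q̇·D_t ξ) + L·D_t ξ = D_t Ψ; (II) the two generalized Killing equations hold at every point (q, v, t): (1) L·(∂ξ/∂v) + (∂L/∂v)·((∂δq/∂v) − v·(∂ξ/∂v)) = ∂Ψ/∂v, and (2) (∂L/∂t)·ξ + (∂L/∂q)·δq + (∂L/∂v)·(∂δq/∂t + v·(∂δq/∂q) − v·(∂ξ/∂t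 + v·(∂ξ/∂q))) + L·(∂ξ/∂t + v·(∂ξ/∂q)) = ∂Ψ/∂t + v·(∂Ψ/∂q). (The Noether–Bessel-Hagen expression is affine in the acceleration q̈, so it vanishes along all curves exactly when the coefficient of q̈ and the remaining part vanish separately.) -/
/-!
The Noether–Bessel-Hagen expression at `(q(t), q̇(t), t)` is affine in the acceleration `q̈(t)`,
with slope and intercept the differences of the two sides of the Killing equations. A quadratic
curve realises any jet `(q, q̇, q̈)` at any time, so the expression vanishes along every curve
exactly when slope and intercept vanish at every point.
-/

/-- Partial derivative in the first (coordinate) argument. -/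
noncomputable def pQ (f : ℝ → ℝ → ℝ → ℝ) (a b c : ℝ) : ℝ := deriv (fun x => f x b c) a

/-- Partial derivative in the second (velocity) argument. -/
noncomputable def pV (f : ℝ → ℝ → ℝ → ℝ) (a b c : ℝ) : ℝ := deriv (fun v => f a v c) b

/-- Partial derivative in the third (time) argument. -/
noncomputable def pT (f : ℝ → ℝ → ℝ → ℝ) (a b c : ℝ) : ℝ := deriv (fun s => f a b s) c

/-- Total time derivative along a curve: `D_t f = ∂f/∂t + ∂f/∂q·q̇ + ∂f/∂v·q̈`,
evaluated at `(a, b, c) = (q(t), q̇(t), t)` with acceleration `w = q̈(t)`. -/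
noncomputable def Dt (f : ℝ → ℝ → ℝ → ℝ) (a b c w : ℝ) : ℝ :=
  pT f a b c + pQ f a b c * b + pV f a b c * w

lemma exists_contDiff_two_jet (a b c w : ℝ) :
    ∃ q : ℝ → ℝ, ContDiff ℝ 2 q ∧ q c = a ∧ deriv q c = b ∧ deriv (deriv q) c = w := by
  set q : ℝ → ℝ := fun t => a + b * (t - c) + w / 2 * (t - c) ^ 2
  have hq' : deriv q = fun t => b + w * (t - c) := by
    funext t
    have h : HasDerivAt q (b * 1 + w / 2 * ((2 : ℕ) * (t - c) ^ (2 - 1) * 1)) t :=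
      ((((hasDerivAt_id t).sub_const c).const_mul b).const_add a).add
        ((((hasDerivAt_id t).sub_const c).pow 2).const_mul (w / 2))
    rw [h.deriv]
    ring
  have hq'' : deriv (deriv q) c = w := by
    have h : HasDerivAt (deriv q) (w * 1) c := by
      rw [hq']
      exact (((hasDerivAt_id c).sub_const c).const_mul w).const_add b
    rw [h.deriv, mul_one]
  refine ⟨q, by fun_prop, by simp [q], by simp [hq'], hq''⟩

lemma forall_mul_add_eq_iff {K : Type*} [Field K] (α β γ : K) :
    (∀ w : K, α * w + β = γ) ↔ α = 0 ∧ β = γ := by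
  refine ⟨fun h => ?_, fun ⟨hα, hβ⟩ w => by rw [hα, hβ, zero_mul, zero_add]⟩
  have hβ : β = γ := by simpa using h 0
  exact ⟨by simpa [hβ] using h 1, hβ⟩

lemma noetherBesselHagen_eq_iff_affine (L ξ δq Ψ : ℝ → ℝ → ℝ → ℝ) (a b c w : ℝ) :
    (pT L a b c * ξ a b c + pQ L a b c * δq a b c
        + pV L a b c * (Dt δq a b c w - b * Dt ξ a b c w)
        + L a b c * Dt ξ a b c w = Dt Ψ a b c w) ↔
      (L a b c * pV ξ a b c + pV L a b c * (pV δq a b c - b * pV ξ a b c) - pV Ψ a b c) * w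
        + (pT L a b c * ξ a b c + pQ L a b c * δq a b c
          + pV L a b c *
              (pT δq a b c + b * pQ δq a b c - b * (pT ξ a b c + b * pQ ξ a b c))
          + L a b c * (pT ξ a b c + b * pQ ξ a b c) - (pT Ψ a b c + b * pQ Ψ a b c)) = 0 := by
  rw [← sub_eq_zero]
  unfold Dt
  constructor <;> intro h <;> linear_combination h

theorem stmt_6_general
    (L ξ δq Ψ : ℝ → ℝ → ℝ → ℝ) :
    (∀ q : ℝ → ℝ, ContDiff ℝ 2 q → ∀ t : ℝ,
      pT L (q t) (deriv q t) t * ξ (q t) (deriv q t) t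
      + pQ L (q t) (deriv q t) t * δq (q t) (deriv q t) t
      + pV L (q t) (deriv q t) t *
          (Dt δq (q t) (deriv q t) t (deriv (deriv q) t)
            - deriv q t * Dt ξ (q t) (deriv q t) t (deriv (deriv q) t))
      + L (q t) (deriv q t) t * Dt ξ (q t) (deriv q t) t (deriv (deriv q) t)
      = Dt Ψ (q t) (deriv q t) t (deriv (deriv q) t))
    ↔ (∀ a b c : ℝ,
      (L a b c * pV ξ a b c
          + pV L a b c * (pV δq a b c - b * pV ξ a b c)
        = pV Ψ a b c)
      ∧ (pT L a b c * ξ a b c + pQ L a b c * δq a b c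
          + pV L a b c *
              (pT δq a b c + b * pQ δq a b c - b * (pT ξ a b c + b * pQ ξ a b c))
          + L a b c * (pT ξ a b c + b * pQ ξ a b c)
        = pT Ψ a b c + b * pQ Ψ a b c)) := by
  refine ⟨fun h a b c => ?_, fun h q _ t => ?_⟩
  · have affine_vanishes : ∀ w : ℝ, _ * w + _ = 0 := fun w => by
      obtain ⟨q, hq, ha, hb, hw⟩ := exists_contDiff_two_jet a b c w
      have hnbh := h q hq c
      rw [ha, hb, hw] at hnbh
      exact (noetherBesselHagen_eq_iff_affine L ξ δq Ψ a b c w).1 hnbh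
    obtain ⟨hslope, hintercept⟩ := (forall_mul_add_eq_iff _ _ _).1 affine_vanishes
    exact ⟨sub_eq_zero.1 hslope, sub_eq_zero.1 hintercept⟩
  · obtain ⟨hslope, hintercept⟩ := h (q t) (deriv q t) t
    rw [noetherBesselHagen_eq_iff_affine, hslope, hintercept]
    ring

/-- The Noether–Bessel-Hagen equation holds along every C² curve if and only if
the two generalized Killing equations hold at every point `(q, v, t)`. -/
theorem stmt_6
    (L ξ δq Ψ : ℝ → ℝ → ℝ → ℝ)
    (hL : ContDiff ℝ 1 (fun x : ℝ × ℝ × ℝ => L x.1 x.2.1 x.2.2))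
    (hξ : ContDiff ℝ 1 (fun x : ℝ × ℝ × ℝ => ξ x.1 x.2.1 x.2.2))
    (hδq : ContDiff ℝ 1 (fun x : ℝ × ℝ × ℝ => δq x.1 x.2.1 x.2.2))
    (hΨ : ContDiff ℝ 1 (fun x : ℝ × ℝ × ℝ => Ψ x.1 x.2.1 x.2.2)) :
    (∀ q : ℝ → ℝ, ContDiff ℝ 2 q → ∀ t : ℝ,
      pT L (q t) (deriv q t) t * ξ (q t) (deriv q t) t
      + pQ L (q t) (deriv q t) t * δq (q t) (deriv q t) t
      + pV L (q t) (deriv q t) t *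
          (Dt δq (q t) (deriv q t) t (deriv (deriv q) t)
            - deriv q t * Dt ξ (q t) (deriv q t) t (deriv (deriv q) t))
      + L (q t) (deriv q t) t * Dt ξ (q t) (deriv q t) t (deriv (deriv q) t)
      = Dt Ψ (q t) (deriv q t) t (deriv (deriv q) t))
    ↔ (∀ a b c : ℝ,
      (L a b c * pV ξ a b c
          + pV L a b c * (pV δq a b c - b * pV ξ a b c)
        = pV Ψ a b c)
      ∧ (pT L a b c * ξ a b c + pQ L a b c * δq a b c
          + pV L a b c *
              (pT δq a b c + b * pQ δq a b c - b * (pT ξ a b c + b * pQ ξ a b c))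
          + L a b c * (pT ξ a b c + b * pQ ξ a b c)
        = pT Ψ a b c + b * pQ Ψ a b c)) :=
  stmt_6_general L ξ δq Ψ
end

section
/- Let n ≥ 1, let g : ℝⁿ → Matrix n×n ℝ be a C¹ map with g(q) symmetric for every q, and let X : ℝⁿ → ℝⁿ be C¹ satisfying the coordinate Killing equations: for all q ∈ ℝⁿ and all indices i, l, Σ_k [ (∂g_{il}/∂q^k)(q)·X^k(q) + g_{ik}(q)·(∂X^k/∂q^l)(q) + g_{kl}(q)·(∂X^k/∂q^i)(q) ] = 0. Let q : ℝ → ℝⁿ be a C² solution of the Euler–Lagrange equations of the kinetic Lagrangian L(q, v) = ½ Σ_{k,l} g_{kl}(q) v^k v^l, i.e. for each index i and all t: d/dt[ Σ_k g_{ik}(q(t))·q̇^k(t) ] = ½ Σ_{k,l} (∂g_{kl}/∂q^i)(q(t))·q̇^k(t)·q̇^l(t). Then the Noether charge t ↦ Σ_{i,k} g_{ik}(q(t))·q̇^k(t)·X^i(q(t)) is constant in t. -/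
/-!
Write `p = g(q) q̇` for the momentum, so that the charge is `p ⬝ X(q)` and its derivative is
`ṗ ⬝ X(q) + p ⬝ (DX q̇)`. The Euler–Lagrange equations say `ṗᵢ = ½ q̇ ⬝ (∂ᵢg) q̇`, and since `g` is
symmetric, `p ⬝ (DX q̇) = ½ q̇ ⬝ (g DX + DXᵀ g) q̇`. Hence the derivative of the charge is
`½ q̇ ⬝ (L_X g) q̇`, where `L_X g = Xᵏ ∂ₖg + g DX + DXᵀ g` is the Lie derivative of the metric,
and the Killing equations say exactly that `L_X g = 0`.
-/

open Finset Matrix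

section QuadraticForms

variable {ι R : Type*} [Fintype ι] [CommRing R]

theorem dotProduct_mulVec_self_eq_sum_sum (M : Matrix ι ι R) (v : ι → R) :
    v ⬝ᵥ (M *ᵥ v) = ∑ k, ∑ l, M k l * v k * v l := by
  simp only [dotProduct, mulVec, mul_sum]
  exact sum_congr rfl fun k _ => sum_congr rfl fun l _ => by ring

theorem two_mul_mulVec_dotProduct_mulVec {G : Matrix ι ι R} (hG : G.IsSymm) (J : Matrix ι ι R)
    (v : ι → R) : 2 * ((G *ᵥ v) ⬝ᵥ (J *ᵥ v)) = v ⬝ᵥ ((G * J + Jᵀ * G) *ᵥ v) := by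
  have hGJ : v ⬝ᵥ ((G * J) *ᵥ v) = (G *ᵥ v) ⬝ᵥ (J *ᵥ v) := by
    rw [← mulVec_mulVec, dotProduct_mulVec, ← mulVec_transpose, hG.eq]
  have hJG : v ⬝ᵥ ((Jᵀ * G) *ᵥ v) = (G *ᵥ v) ⬝ᵥ (J *ᵥ v) := by
    rw [← mulVec_mulVec, dotProduct_mulVec, vecMul_transpose, dotProduct_comm]
  rw [add_mulVec, dotProduct_add, hGJ, hJG]
  ring

end QuadraticForms

theorem HasDerivAt.dotProduct {ι 𝕜 : Type*} [Fintype ι] [NontriviallyNormedField 𝕜]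
    {p w : 𝕜 → ι → 𝕜} {p' w' : ι → 𝕜} {t : 𝕜} (hp : HasDerivAt p p' t) (hw : HasDerivAt w w' t) :
    HasDerivAt (fun s => p s ⬝ᵥ w s) (p' ⬝ᵥ w t + p t ⬝ᵥ w') t := by
  unfold _root_.dotProduct
  rw [← sum_add_distrib]
  exact HasDerivAt.fun_sum fun i _ => (hasDerivAt_pi.1 hp i).fun_mul (hasDerivAt_pi.1 hw i)

section Coordinates

variable {ι : Type*} [Fintype ι] [DecidableEq ι]

noncomputable def jacobianMatrix (F : (ι → ℝ) → ι → ℝ) (x : ι → ℝ) : Matrix ι ι ℝ :=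
  Matrix.of fun k l => fderiv ℝ (fun y => F y k) x (Pi.single l 1)

noncomputable def partialDerivMatrix (g : (ι → ℝ) → Matrix ι ι ℝ) (x : ι → ℝ) (k : ι) :
    Matrix ι ι ℝ :=
  Matrix.of fun i j => fderiv ℝ (fun y => g y i j) x (Pi.single k 1)

noncomputable def lieDerivMetric (g : (ι → ℝ) → Matrix ι ι ℝ) (X : (ι → ℝ) → ι → ℝ)
    (x : ι → ℝ) : Matrix ι ι ℝ :=
  ∑ k, X x k • partialDerivMatrix g x k + g x * jacobianMatrix X x
    + (jacobianMatrix X x)ᵀ * g x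

noncomputable def momentum (g : (ι → ℝ) → Matrix ι ι ℝ) (q : ℝ → ι → ℝ) (t : ℝ) : ι → ℝ :=
  g (q t) *ᵥ deriv q t

noncomputable def noetherCharge (g : (ι → ℝ) → Matrix ι ι ℝ) (X : (ι → ℝ) → ι → ℝ)
    (q : ℝ → ι → ℝ) (t : ℝ) : ℝ :=
  momentum g q t ⬝ᵥ X (q t)

theorem fderiv_apply_eq_jacobianMatrix_mulVec (F : (ι → ℝ) → ι → ℝ) (x v : ι → ℝ) (k : ι) :
    fderiv ℝ (fun y => F y k) x v = (jacobianMatrix F x *ᵥ v) k := by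
  conv_lhs => rw [pi_eq_sum_univ' v]
  simp [jacobianMatrix, mulVec, dotProduct, map_sum, mul_comm]

theorem hasDerivAt_comp_jacobianMatrix_mulVec {F : (ι → ℝ) → ι → ℝ} {γ : ℝ → ι → ℝ}
    {γ' : ι → ℝ} {t : ℝ} (hF : ∀ k, DifferentiableAt ℝ (fun y => F y k) (γ t))
    (hγ : HasDerivAt γ γ' t) :
    HasDerivAt (fun s => F (γ s)) (jacobianMatrix F (γ t) *ᵥ γ') t := by
  refine hasDerivAt_pi.2 fun k => ?_
  rw [← fderiv_apply_eq_jacobianMatrix_mulVec]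
  exact (hF k).hasFDerivAt.comp_hasDerivAt t hγ

theorem lieDerivMetric_eq_zero {g : (ι → ℝ) → Matrix ι ι ℝ} {X : (ι → ℝ) → ι → ℝ}
    {x : ι → ℝ}
    (hK : ∀ i l, ∑ k, (fderiv ℝ (fun y => g y i l) x (Pi.single k 1) * X x k
        + g x i k * fderiv ℝ (fun y => X y k) x (Pi.single l 1)
        + g x k l * fderiv ℝ (fun y => X y k) x (Pi.single i 1)) = 0) :
    lieDerivMetric g X x = 0 := by
  ext i l
  rw [Matrix.zero_apply, ← hK i l]
  simp [lieDerivMetric, partialDerivMatrix, jacobianMatrix, mul_apply, Matrix.sum_apply,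
    sum_add_distrib, mul_comm]

theorem dotProduct_lieDerivMetric_mulVec {g : (ι → ℝ) → Matrix ι ι ℝ} {x : ι → ℝ}
    (hG : (g x).IsSymm) (X : (ι → ℝ) → ι → ℝ) (v : ι → ℝ) :
    v ⬝ᵥ (lieDerivMetric g X x *ᵥ v) = ∑ i, v ⬝ᵥ (partialDerivMatrix g x i *ᵥ v) * X x i
      + 2 * ((g x *ᵥ v) ⬝ᵥ (jacobianMatrix X x *ᵥ v)) := by
  have hsum : ∑ i, v ⬝ᵥ (partialDerivMatrix g x i *ᵥ v) * X x i
      = v ⬝ᵥ ((∑ k, X x k • partialDerivMatrix g x k) *ᵥ v) := by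
    simp only [sum_mulVec, dotProduct_sum, smul_mulVec, dotProduct_smul, smul_eq_mul, mul_comm]
  rw [hsum, two_mul_mulVec_dotProduct_mulVec hG, ← dotProduct_add, ← add_mulVec, ← add_assoc,
    lieDerivMetric]

theorem hasDerivAt_momentum {g : (ι → ℝ) → Matrix ι ι ℝ} {q : ℝ → ι → ℝ} {t : ℝ}
    (hp : ∀ i, DifferentiableAt ℝ (fun s => ∑ k, g (q s) i k * deriv q s k) t)
    (hEL : ∀ i, deriv (fun s => ∑ k, g (q s) i k * deriv q s k) t
        = (1/2) * ∑ k, ∑ l,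
            fderiv ℝ (fun y => g y k l) (q t) (Pi.single i 1) * deriv q t k * deriv q t l) :
    HasDerivAt (momentum g q)
      (fun i => 1/2 * (deriv q t ⬝ᵥ (partialDerivMatrix g (q t) i *ᵥ deriv q t))) t := by
  refine hasDerivAt_pi.2 fun i => ?_
  rw [dotProduct_mulVec_self_eq_sum_sum]
  exact hEL i ▸ (hp i).hasDerivAt

theorem hasDerivAt_noetherCharge {g : (ι → ℝ) → Matrix ι ι ℝ} {X : (ι → ℝ) → ι → ℝ}
    {q : ℝ → ι → ℝ} {t : ℝ} (hG : (g (q t)).IsSymm) (hK : lieDerivMetric g X (q t) = 0)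
    (hX : ∀ k, DifferentiableAt ℝ (fun y => X y k) (q t)) (hq : HasDerivAt q (deriv q t) t)
    (hp : HasDerivAt (momentum g q)
      (fun i => 1/2 * (deriv q t ⬝ᵥ (partialDerivMatrix g (q t) i *ᵥ deriv q t))) t) :
    HasDerivAt (noetherCharge g X q) 0 t := by
  refine (hp.dotProduct (hasDerivAt_comp_jacobianMatrix_mulVec hX hq)).congr_deriv ?_
  have hforce : (fun i => 1/2 * (deriv q t ⬝ᵥ (partialDerivMatrix g (q t) i *ᵥ deriv q t)))
      ⬝ᵥ X (q t)
      = 1/2 * ∑ i, deriv q t ⬝ᵥ (partialDerivMatrix g (q t) i *ᵥ deriv q t) * X (q t) i := by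
    rw [dotProduct, mul_sum]
    exact sum_congr rfl fun i _ => mul_assoc _ _ _
  have hlie := dotProduct_lieDerivMetric_mulVec hG X (deriv q t)
  rw [hK, zero_mulVec, dotProduct_zero] at hlie
  rw [momentum]
  linear_combination hforce - (1/2 : ℝ) * hlie

end Coordinates

theorem stmt_7_general
    (n : ℕ)
    (g : (Fin n → ℝ) → Matrix (Fin n) (Fin n) ℝ)
    (hg : ∀ i j : Fin n, ContDiff ℝ 1 (fun x => g x i j))
    (hsymm : ∀ (x : Fin n → ℝ) (i j : Fin n), g x i j = g x j i)
    (X : (Fin n → ℝ) → (Fin n → ℝ))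
    (hX : ContDiff ℝ 1 X)
    (hKilling : ∀ (x : Fin n → ℝ) (i l : Fin n),
      ∑ k, (fderiv ℝ (fun y => g y i l) x (Pi.single k 1) * X x k
        + g x i k * fderiv ℝ (fun y => X y k) x (Pi.single l 1)
        + g x k l * fderiv ℝ (fun y => X y k) x (Pi.single i 1)) = 0)
    (q : ℝ → (Fin n → ℝ)) (hq : ContDiff ℝ 2 q)
    (hEL : ∀ (i : Fin n) (t : ℝ),
      deriv (fun s => ∑ k, g (q s) i k * deriv q s k) t
        = (1/2) * ∑ k, ∑ l,
            fderiv ℝ (fun y => g y k l) (q t) (Pi.single i 1)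
              * deriv q t k * deriv q t l) :
    ∀ t₁ t₂ : ℝ,
      (∑ i, ∑ k, g (q t₁) i k * deriv q t₁ k * X (q t₁) i)
        = ∑ i, ∑ k, g (q t₂) i k * deriv q t₂ k * X (q t₂) i := by
  have hq₁ : Differentiable ℝ q := hq.differentiable (by norm_num)
  have hq₂ : Differentiable ℝ (deriv q) := (hq.deriv' (n := 1)).differentiable one_ne_zero
  have hg₁ : ∀ i j, Differentiable ℝ (fun x => g x i j) :=
    fun i j => (hg i j).differentiable one_ne_zero
  have hX₁ : ∀ k, Differentiable ℝ (fun y => X y k) :=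
    fun k => (contDiff_pi.1 hX k).differentiable one_ne_zero
  have hp : ∀ t i, DifferentiableAt ℝ (fun s => ∑ k, g (q s) i k * deriv q s k) t := by
    intro t i
    fun_prop
  have hcharge (t : ℝ) : HasDerivAt (noetherCharge g X q) 0 t :=
    hasDerivAt_noetherCharge (IsSymm.ext fun i j => hsymm _ j i)
      (lieDerivMetric_eq_zero (hKilling (q t))) (fun k => hX₁ k _) (hq₁ t).hasDerivAt
      (hasDerivAt_momentum (hp t) (fun i => hEL i t))
  intro t₁ t₂
  have := is_const_of_deriv_eq_zero (fun t => (hcharge t).differentiableAt)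
    (fun t => (hcharge t).deriv) t₁ t₂
  simpa only [noetherCharge, momentum, dotProduct, mulVec, sum_mul] using this

/-- For the kinetic Lagrangian `L = ½ g_{kl}(q) v^k v^l` with symmetric metric `g`,
a vector field `X` satisfying the coordinate Killing equations yields, along any
solution of the Euler–Lagrange equations, the conserved Noether charge
`g_{ik}(q) q̇^k X^i(q)`. -/
theorem stmt_7
    (n : ℕ) (hn : 1 ≤ n)
    (g : (Fin n → ℝ) → Matrix (Fin n) (Fin n) ℝ)
    (hg : ∀ i j : Fin n, ContDiff ℝ 1 (fun x => g x i j))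
    (hsymm : ∀ (x : Fin n → ℝ) (i j : Fin n), g x i j = g x j i)
    (X : (Fin n → ℝ) → (Fin n → ℝ))
    (hX : ContDiff ℝ 1 X)
    (hKilling : ∀ (x : Fin n → ℝ) (i l : Fin n),
      ∑ k, (fderiv ℝ (fun y => g y i l) x (Pi.single k 1) * X x k
        + g x i k * fderiv ℝ (fun y => X y k) x (Pi.single l 1)
        + g x k l * fderiv ℝ (fun y => X y k) x (Pi.single i 1)) = 0)
    (q : ℝ → (Fin n → ℝ)) (hq : ContDiff ℝ 2 q)
    (hEL : ∀ (i : Fin n) (t : ℝ),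
      deriv (fun s => ∑ k, g (q s) i k * deriv q s k) t
        = (1/2) * ∑ k, ∑ l,
            fderiv ℝ (fun y => g y k l) (q t) (Pi.single i 1)
              * deriv q t k * deriv q t l) :
    ∀ t₁ t₂ : ℝ,
      (∑ i, ∑ k, g (q t₁) i k * deriv q t₁ k * X (q t₁) i)
        = ∑ i, ∑ k, g (q t₂) i k * deriv q t₂ k * X (q t₂) i :=
  stmt_7_general n g hg hsymm X hX hKilling q hq hEL
end

section
/- (Clausius–Noether theorem, post-averaging Lagrangian form.) Let L : ℝ³ → ℝ be C¹ (arguments written (q, v, λ)) and set E(q, v, λ) = v·(∂L/∂v) − L. Let τ₁ < τ₂, let λ, Ē, ξ, Ψ : [τ₁, τ₂] → ℝ be C¹, let M : [τ₁, τ₂] → ℝ be continuous, and for each ε ∈ (0, 1] let q_ε : ℝ → ℝ be C¹ with E(q_ε(τ/ε), q̇_ε(τ/ε), λ(τ)) = Ē(τ) for all τ ∈ [τ₁, τ₂]. Assume: (i) (thermodynamic averaging) for every continuous G : [τ₁, τ₂] → ℝ and every subinterval [s₁, s₂] ⊆ [τ₁, τ₂], lim_{ε→0⁺} ∫_{s₁}^{s₂}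 G(τ)·[ (∂L/∂λ)(q_ε(τ/ε), q̇_ε(τ/ε), λ(τ)) − M(τ) ] dτ = 0; (ii) (quasisymmetry) for every subinterval [s₁, s₂] ⊆ [τ₁, τ₂], lim_{ε→0⁺} ∫_{s₁}^{s₂} [ ξ(τ)·Ē'(τ) + ξ(τ)·λ'(τ)·(∂L/∂λ)(q_ε(τ/ε), q̇_ε(τ/ε), λ(τ)) − (ξ·Ē)'(τ) ] dτ = Ψ(s₂) − Ψ(s₁). Then the Noether charge N := Ψ + ξ·Ē satisfies, for every τ ∈ [τ₁, τ₂], N'(τ) = ξ(τ)·( Ē'(τ) + M(τ)·λ'(τ) ); that is, ξ·(dE + ⟨∂_λL⟩ dλ) = dN is an exact differential. -/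
/-!
Subtracting the averaging hypothesis with test function `G = ξ λ'` from the quasisymmetry
hypothesis eliminates the fast variable: the difference of the two integrands is
`ξ Ē' + ξ λ' M - (ξ Ē)'`, independent of `ε`, so passing to the limit gives
`∫_{τ₁}^{s} (ξ Ē' + ξ λ' M - (ξ Ē)') = Ψ s - Ψ τ₁` for every `s ∈ [τ₁, τ₂]`.
The fundamental theorem of calculus then identifies the integrand with `Ψ'`, which is the
claim for `N' = Ψ' + (ξ Ē)'`.
-/

open Filter Set Topology MeasureTheory intervalIntegral

theorem ContDiff.continuous_deriv_snd {E F : Type*} [NormedAddCommGroup E] [NormedSpace ℝ E]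
    [NormedAddCommGroup F] [NormedSpace ℝ F] {L : E → ℝ → F}
    (hL : ContDiff ℝ 1 (Function.uncurry L)) :
    Continuous fun p : E × ℝ => deriv (L p.1) p.2 := by
  have hpartial (p : E × ℝ) : deriv (L p.1) p.2 = fderiv ℝ (Function.uncurry L) p (0, 1) := by
    have hline : HasDerivAt (fun l : ℝ => (p.1, l)) ((0 : E), (1 : ℝ)) p.2 :=
      (hasDerivAt_const p.2 p.1).prodMk (hasDerivAt_id p.2)
    exact (((hL.differentiable one_ne_zero) p).hasFDerivAt.comp_hasDerivAt p.2 hline).deriv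
  simp only [hpartial]
  exact (hL.continuous_fderiv one_ne_zero).clm_apply continuous_const

theorem intervalIntegral.integral_eq_of_tendsto_integral_sub {ι : Type*} {l : Filter ι}
    [l.NeBot] {f g : ι → ℝ → ℝ} {h : ℝ → ℝ} {a b c : ℝ}
    (hf : Tendsto (fun i => ∫ x in a..b, f i x) l (𝓝 c))
    (hg : Tendsto (fun i => ∫ x in a..b, g i x) l (𝓝 0))
    (hfi : ∀ᶠ i in l, IntervalIntegrable (f i) volume a b)
    (hhi : IntervalIntegrable h volume a b)
    (hfg : ∀ i x, g i x = f i x - h x) :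
    ∫ x in a..b, h x = c := by
  have hsub : ∀ᶠ i in l,
      (∫ x in a..b, f i x) - ∫ x in a..b, g i x = ∫ x in a..b, h x := by
    filter_upwards [hfi] with i hi
    simp only [hfg, integral_sub hi hhi, sub_sub_cancel]
  simpa using tendsto_nhds_unique tendsto_const_nhds ((hf.sub hg).congr' hsub)

theorem eqOn_deriv_of_integral_eq_sub {F Ψ : ℝ → ℝ} {a b : ℝ} (hab : a < b)
    (hF : ContinuousOn F (Icc a b)) (hΨ : ContDiff ℝ 1 Ψ)
    (hint : ∀ s ∈ Icc a b, ∫ t in a..s, F t = Ψ s - Ψ a) :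
    EqOn F (deriv Ψ) (Icc a b) := by
  have hinterior : EqOn F (deriv Ψ) (Ioo a b) := by
    intro t ht
    have hnhds : Icc a b ∈ 𝓝 t := Icc_mem_nhds ht.1 ht.2
    have hFint : IntervalIntegrable F volume a t :=
      (hF.mono (Icc_subset_Icc_right ht.2.le)).intervalIntegrable_of_Icc ht.1.le
    have hFTC : HasDerivAt (fun u => ∫ x in a..u, F x) (F t) t :=
      integral_hasDerivAt_right hFint
        ⟨Icc a b, hnhds, hF.aestronglyMeasurable measurableSet_Icc⟩ (hF.continuousAt hnhds)
    have hΨt : HasDerivAt (fun u => Ψ u - Ψ a) (F t) t :=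
      hFTC.congr_of_eventuallyEq (eventually_of_mem hnhds fun u hu => (hint u hu).symm)
    exact hΨt.unique ((hΨ.differentiable one_ne_zero t).hasDerivAt.sub_const _)
  exact hinterior.of_subset_closure hF (hΨ.continuous_deriv le_rfl).continuousOn
    Ioo_subset_Icc_self (closure_Ioo hab.ne).ge

theorem stmt_8_general
    (L : ℝ → ℝ → ℝ → ℝ)
    (hL : ContDiff ℝ 1 (fun x : ℝ × ℝ × ℝ => L x.1 x.2.1 x.2.2))
    (τ₁ τ₂ : ℝ) (hτ : τ₁ < τ₂)
    (lam Ebar ξ Ψ : ℝ → ℝ) (M : ℝ → ℝ)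
    (hlam : ContDiff ℝ 1 lam) (hEbar : ContDiff ℝ 1 Ebar)
    (hξ : ContDiff ℝ 1 ξ) (hΨ : ContDiff ℝ 1 Ψ)
    (hM : ContinuousOn M (Icc τ₁ τ₂))
    (qe : ℝ → ℝ → ℝ)
    (hqe : ∀ ε ∈ Ioc (0:ℝ) 1, ContDiff ℝ 1 (qe ε))
    (havg : ∀ G : ℝ → ℝ, ContinuousOn G (Icc τ₁ τ₂) →
      ∀ s₁ s₂ : ℝ, τ₁ ≤ s₁ → s₁ ≤ s₂ → s₂ ≤ τ₂ →
      Tendsto (fun ε : ℝ => ∫ τ in s₁..s₂,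
          G τ * (deriv (fun l => L (qe ε (τ/ε)) (deriv (qe ε) (τ/ε)) l) (lam τ)
            - M τ))
        (𝓝[>] (0:ℝ)) (𝓝 0))
    (hqs : ∀ s₁ s₂ : ℝ, τ₁ ≤ s₁ → s₁ ≤ s₂ → s₂ ≤ τ₂ →
      Tendsto (fun ε : ℝ => ∫ τ in s₁..s₂,
          (ξ τ * deriv Ebar τ
            + ξ τ * deriv lam τ *
                deriv (fun l => L (qe ε (τ/ε)) (deriv (qe ε) (τ/ε)) l) (lam τ)
            - deriv (fun σ => ξ σ * Ebar σ) τ))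
        (𝓝[>] (0:ℝ)) (𝓝 (Ψ s₂ - Ψ s₁))) :
    ∀ τ ∈ Icc τ₁ τ₂,
      deriv (fun σ => Ψ σ + ξ σ * Ebar σ) τ
        = ξ τ * (deriv Ebar τ + M τ * deriv lam τ) := by
  have hξEbar : ContDiff ℝ 1 fun σ => ξ σ * Ebar σ := hξ.mul hEbar
  have hξdEbar : Continuous fun τ => ξ τ * deriv Ebar τ :=
    hξ.continuous.mul (hEbar.continuous_deriv le_rfl)
  have hξdlam : Continuous fun τ => ξ τ * deriv lam τ :=
    hξ.continuous.mul (hlam.continuous_deriv le_rfl)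
  have hdL : Continuous fun p : (ℝ × ℝ) × ℝ => deriv (L p.1.1 p.1.2) p.2 :=
    ContDiff.continuous_deriv_snd (L := fun (y : ℝ × ℝ) l => L y.1 y.2 l)
      (hL.comp (by fun_prop : ContDiff ℝ 1 fun p : (ℝ × ℝ) × ℝ => (p.1.1, p.1.2, p.2)))
  have hdLε : ∀ ε ∈ Ioc (0:ℝ) 1, Continuous fun τ =>
      deriv (fun l => L (qe ε (τ/ε)) (deriv (qe ε) (τ/ε)) l) (lam τ) := fun ε hε =>
    have hq := hqe ε hε
    hdL.comp (((hq.continuous.comp (continuous_id.div_const ε)).prodMk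
      ((hq.continuous_deriv le_rfl).comp (continuous_id.div_const ε))).prodMk hlam.continuous)
  set F : ℝ → ℝ := fun τ => ξ τ * deriv Ebar τ + ξ τ * deriv lam τ * M τ
      - deriv (fun σ => ξ σ * Ebar σ) τ
  have hF : ContinuousOn F (Icc τ₁ τ₂) :=
    (hξdEbar.continuousOn.add (hξdlam.continuousOn.mul hM)).sub
      (hξEbar.continuous_deriv le_rfl).continuousOn
  have hintF : ∀ s ∈ Icc τ₁ τ₂, ∫ τ in τ₁..s, F τ = Ψ s - Ψ τ₁ := fun s hs =>
    integral_eq_of_tendsto_integral_sub (hqs τ₁ s le_rfl hs.1 hs.2)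
      (havg _ hξdlam.continuousOn τ₁ s le_rfl hs.1 hs.2)
      (eventually_of_mem (Ioc_mem_nhdsGT zero_lt_one) fun ε hε =>
        ((hξdEbar.add (hξdlam.mul (hdLε ε hε))).sub
          (hξEbar.continuous_deriv le_rfl)).intervalIntegrable _ _)
      ((hF.mono (Icc_subset_Icc_right hs.2)).intervalIntegrable_of_Icc hs.1)
      (fun ε τ => by ring)
  intro τ hτ'
  rw [deriv_fun_add (hΨ.differentiable one_ne_zero τ) (hξEbar.differentiable one_ne_zero τ),
    ← eqOn_deriv_of_integral_eq_sub hτ hF hΨ hintF hτ']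
  ring

/-- Clausius–Noether theorem (post-averaging Lagrangian form): under the
thermodynamic averaging hypothesis and the quasisymmetry hypothesis in the
quasistatic limit `ε → 0⁺`, the Noether charge `N = Ψ + ξ·Ē` satisfies
`dN = ξ·(dĒ + M dλ)`, i.e. heat over temperature is an exact differential. -/
theorem stmt_8
    (L : ℝ → ℝ → ℝ → ℝ)
    (hL : ContDiff ℝ 1 (fun x : ℝ × ℝ × ℝ => L x.1 x.2.1 x.2.2))
    (E : ℝ → ℝ → ℝ → ℝ)
    (hEdef : E = fun q v lam => v * deriv (fun w => L q w lam) v - L q v lam)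
    (τ₁ τ₂ : ℝ) (hτ : τ₁ < τ₂)
    (lam Ebar ξ Ψ : ℝ → ℝ) (M : ℝ → ℝ)
    (hlam : ContDiff ℝ 1 lam) (hEbar : ContDiff ℝ 1 Ebar)
    (hξ : ContDiff ℝ 1 ξ) (hΨ : ContDiff ℝ 1 Ψ)
    (hM : ContinuousOn M (Icc τ₁ τ₂))
    (qe : ℝ → ℝ → ℝ)
    (hqe : ∀ ε ∈ Ioc (0:ℝ) 1, ContDiff ℝ 1 (qe ε))
    (hcons : ∀ ε ∈ Ioc (0:ℝ) 1, ∀ τ ∈ Icc τ₁ τ₂,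
      E (qe ε (τ/ε)) (deriv (qe ε) (τ/ε)) (lam τ) = Ebar τ)
    (havg : ∀ G : ℝ → ℝ, ContinuousOn G (Icc τ₁ τ₂) →
      ∀ s₁ s₂ : ℝ, τ₁ ≤ s₁ → s₁ ≤ s₂ → s₂ ≤ τ₂ →
      Tendsto (fun ε : ℝ => ∫ τ in s₁..s₂,
          G τ * (deriv (fun l => L (qe ε (τ/ε)) (deriv (qe ε) (τ/ε)) l) (lam τ)
            - M τ))
        (𝓝[>] (0:ℝ)) (𝓝 0))
    (hqs : ∀ s₁ s₂ : ℝ, τ₁ ≤ s₁ → s₁ ≤ s₂ → s₂ ≤ τ₂ →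
      Tendsto (fun ε : ℝ => ∫ τ in s₁..s₂,
          (ξ τ * deriv Ebar τ
            + ξ τ * deriv lam τ *
                deriv (fun l => L (qe ε (τ/ε)) (deriv (qe ε) (τ/ε)) l) (lam τ)
            - deriv (fun σ => ξ σ * Ebar σ) τ))
        (𝓝[>] (0:ℝ)) (𝓝 (Ψ s₂ - Ψ s₁))) :
    ∀ τ ∈ Icc τ₁ τ₂,
      deriv (fun σ => Ψ σ + ξ σ * Ebar σ) τ
        = ξ τ * (deriv Ebar τ + M τ * deriv lam τ) :=
  stmt_8_general L hL τ₁ τ₂ hτ lam Ebar ξ Ψ M hlam hEbar hξ hΨ hM qe hqe havg hqs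
end

section
/- Let H : ℝ³ → ℝ be C¹ and F : ℝ³ → ℝ be C² (arguments written (q, p, t)), and suppose F satisfies the conservation-law identity ∂F/∂t + (∂F/∂q)·(∂H/∂p) − (∂F/∂p)·(∂H/∂q) = 0 at every point (q, p, t) (i.e. ∂F/∂t + {F, H} = 0). Then along every C¹ path (q(t), p(t)): (∂F/∂q)·(q̇(t) − ∂H/∂p) + (∂F/∂p)·(ṗ(t) + ∂H/∂q) + d/dt[ −p(t)·(∂F/∂p)(q(t), p(t), t) ] = d/dt[ F(q(t), p(t), t) − p(t)·(∂F/∂p)(q(t), p(t), t) ], with all partial derivatives evaluated at (q(t), p(t), t). Hence the phase-space shift δq = −∂F/∂p, δp = ∂F/∂q (with ξ = 0) is a quasisymmetry of the Hamiltonian action with boundary function Ψ = F − p·∂F/∂p, and its Noether charge N = Ψ − p·δq = Ψ + p·∂F/∂p equals F itself. -/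
/-!
By the chain rule, `d/dt F(q, p, t) = F_q q̇ + F_p ṗ + F_t`, and the conservation law replaces
`F_t` by `−{F, H} = −F_q H_p + F_p H_q`, which turns the right-hand side into
`F_q (q̇ − H_p) + F_p (ṗ + H_q)`. The term `−p·F_p` occurs on both sides of the quasisymmetry
identity; since `F` is `C²` it is differentiable along the path, so it cancels.
The statement about the Noether charge is pure algebra.
-/

variable {E : Type*} [NormedAddCommGroup E] [NormedSpace ℝ E]

def uncurry₃ (f : ℝ → ℝ → ℝ → E) (x : ℝ × ℝ × ℝ) : E := f x.1 x.2.1 x.2.2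

section ChainRule

variable {f : ℝ → ℝ → ℝ → E}

theorem hasDerivAt_comp_curve_fderiv_s10 {x y z : ℝ → ℝ} {x' y' z' t : ℝ}
    (hf : DifferentiableAt ℝ (uncurry₃ f) (x t, y t, z t))
    (hx : HasDerivAt x x' t) (hy : HasDerivAt y y' t) (hz : HasDerivAt z z' t) :
    HasDerivAt (fun s => f (x s) (y s) (z s))
      (fderiv ℝ (uncurry₃ f) (x t, y t, z t) (x', y', z')) t :=
  hf.hasFDerivAt.comp_hasDerivAt (f := fun s => (x s, y s, z s)) t (hx.prodMk (hy.prodMk hz))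

variable {a b c : ℝ}

theorem deriv_fst_eq_fderiv (hf : DifferentiableAt ℝ (uncurry₃ f) (a, b, c)) :
    deriv (fun x => f x b c) a = fderiv ℝ (uncurry₃ f) (a, b, c) (1, 0, 0) :=
  (hasDerivAt_comp_curve_fderiv_s10 hf (hasDerivAt_id a) (hasDerivAt_const a b)
    (hasDerivAt_const a c)).deriv

theorem deriv_snd_eq_fderiv (hf : DifferentiableAt ℝ (uncurry₃ f) (a, b, c)) :
    deriv (fun y => f a y c) b = fderiv ℝ (uncurry₃ f) (a, b, c) (0, 1, 0) :=
  (hasDerivAt_comp_curve_fderiv_s10 hf (hasDerivAt_const b a) (hasDerivAt_id b)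
    (hasDerivAt_const b c)).deriv

theorem deriv_thd_eq_fderiv (hf : DifferentiableAt ℝ (uncurry₃ f) (a, b, c)) :
    deriv (fun z => f a b z) c = fderiv ℝ (uncurry₃ f) (a, b, c) (0, 0, 1) :=
  (hasDerivAt_comp_curve_fderiv_s10 hf (hasDerivAt_const c a) (hasDerivAt_const c b)
    (hasDerivAt_id c)).deriv

theorem fderiv_uncurry₃_apply (hf : DifferentiableAt ℝ (uncurry₃ f) (a, b, c))
    (u v w : ℝ) :
    fderiv ℝ (uncurry₃ f) (a, b, c) (u, v, w)
      = u • deriv (fun x => f x b c) a + v • deriv (fun y => f a y c) b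
        + w • deriv (fun z => f a b z) c := by
  have hdecomp : ((u, v, w) : ℝ × ℝ × ℝ) = u • (1, 0, 0) + v • (0, 1, 0) + w • (0, 0, 1) := by
    simp
  rw [deriv_fst_eq_fderiv hf, deriv_snd_eq_fderiv hf, deriv_thd_eq_fderiv hf, hdecomp,
    map_add, map_add, map_smul, map_smul, map_smul]

theorem hasDerivAt_comp_curve_s10 {x y z : ℝ → ℝ} {x' y' z' t : ℝ}
    (hf : DifferentiableAt ℝ (uncurry₃ f) (x t, y t, z t))
    (hx : HasDerivAt x x' t) (hy : HasDerivAt y y' t) (hz : HasDerivAt z z' t) :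
    HasDerivAt (fun s => f (x s) (y s) (z s))
      (x' • deriv (fun a => f a (y t) (z t)) (x t) + y' • deriv (fun b => f (x t) b (z t)) (y t)
        + z' • deriv (fun c => f (x t) (y t) c) (z t)) t := by
  rw [← fderiv_uncurry₃_apply hf]
  exact hasDerivAt_comp_curve_fderiv_s10 hf hx hy hz

theorem ContDiff.uncurry₃_deriv_snd {n : WithTop ℕ∞} (hf : ContDiff ℝ (n + 1) (uncurry₃ f)) :
    ContDiff ℝ n (uncurry₃ fun a b c => deriv (fun y => f a y c) b) := by
  have hpartial : (uncurry₃ fun a b c => deriv (fun y => f a y c) b)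
      = fun x => fderiv ℝ (uncurry₃ f) x (0, 1, 0) := by
    funext x
    exact deriv_snd_eq_fderiv ((hf.differentiable (by simp)) x)
  rw [hpartial]
  exact (hf.fderiv_right le_rfl).clm_apply contDiff_const

end ChainRule

theorem hasDerivAt_conserved_along_path {H F : ℝ → ℝ → ℝ → ℝ} {q p : ℝ → ℝ} {q' p' t : ℝ}
    (hF : DifferentiableAt ℝ (uncurry₃ F) (q t, p t, t))
    (hcons : deriv (fun s => F (q t) (p t) s) t
        + deriv (fun x => F x (p t) t) (q t) * deriv (fun y => H (q t) y t) (p t)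
        - deriv (fun y => F (q t) y t) (p t) * deriv (fun x => H x (p t) t) (q t) = 0)
    (hq : HasDerivAt q q' t) (hp : HasDerivAt p p' t) :
    HasDerivAt (fun s => F (q s) (p s) s)
      (deriv (fun x => F x (p t) t) (q t) * (q' - deriv (fun y => H (q t) y t) (p t))
        + deriv (fun y => F (q t) y t) (p t) * (p' + deriv (fun x => H x (p t) t) (q t))) t := by
  refine (hasDerivAt_comp_curve_s10 hF hq hp (hasDerivAt_id' t)).congr_deriv ?_
  simp only [smul_eq_mul, one_mul]
  linear_combination hcons

theorem stmt_10_general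
    (H F : ℝ → ℝ → ℝ → ℝ)
    (hF : ContDiff ℝ 2 (fun x : ℝ × ℝ × ℝ => F x.1 x.2.1 x.2.2))
    (hcons : ∀ a b c : ℝ,
      deriv (fun s => F a b s) c
        + deriv (fun x => F x b c) a * deriv (fun y => H a y c) b
        - deriv (fun y => F a y c) b * deriv (fun x => H x b c) a = 0) :
    ∀ q p : ℝ → ℝ, ContDiff ℝ 1 q → ContDiff ℝ 1 p → ∀ t : ℝ,
      (deriv (fun x => F x (p t) t) (q t)
          * (deriv q t - deriv (fun y => H (q t) y t) (p t))
        + deriv (fun y => F (q t) y t) (p t)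
          * (deriv p t + deriv (fun x => H x (p t) t) (q t))
        + deriv (fun s => - p s * deriv (fun y => F (q s) y s) (p s)) t
      = deriv (fun s => F (q s) (p s) s
          - p s * deriv (fun y => F (q s) y s) (p s)) t)
      ∧ ((F (q t) (p t) t - p t * deriv (fun y => F (q t) y t) (p t))
          + p t * deriv (fun y => F (q t) y t) (p t)
        = F (q t) (p t) t) := by
  intro q p hq hp t
  refine ⟨?_, sub_add_cancel _ _⟩
  have hq' := (hq.differentiable one_ne_zero t).hasDerivAt
  have hp' := (hp.differentiable one_ne_zero t).hasDerivAt
  have hpath : DifferentiableAt ℝ (fun s => ((q s, p s, s) : ℝ × ℝ × ℝ)) t :=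
    (hq'.prodMk (hp'.prodMk (hasDerivAt_id t))).differentiableAt
  have hFt := hasDerivAt_conserved_along_path ((hF.differentiable two_ne_zero) _)
    (hcons (q t) (p t) t) hq' hp'
  have hcorrection : DifferentiableAt ℝ (fun s => p s * deriv (fun y => F (q s) y s) (p s)) t :=
    hp'.differentiableAt.mul
      ((ContDiff.uncurry₃_deriv_snd (n := 1) hF).differentiable one_ne_zero _ |>.comp t hpath)
  simp only [neg_mul]
  rw [deriv.fun_neg, deriv_fun_sub hFt.differentiableAt hcorrection, hFt.deriv]
  exact (sub_eq_add_neg _ _).symm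

/-- A conserved quantity `F` (with `∂F/∂t + {F, H} = 0`) generates its own
symmetry: the phase-space shift `δq = −∂F/∂p`, `δp = ∂F/∂q` (with `ξ = 0`) is a
quasisymmetry of the Hamiltonian action with boundary function
`Ψ = F − p·∂F/∂p`, and its Noether charge `N = Ψ + p·∂F/∂p` equals `F`. -/
theorem stmt_10
    (H F : ℝ → ℝ → ℝ → ℝ)
    (hH : ContDiff ℝ 1 (fun x : ℝ × ℝ × ℝ => H x.1 x.2.1 x.2.2))
    (hF : ContDiff ℝ 2 (fun x : ℝ × ℝ × ℝ => F x.1 x.2.1 x.2.2))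
    (hcons : ∀ a b c : ℝ,
      deriv (fun s => F a b s) c
        + deriv (fun x => F x b c) a * deriv (fun y => H a y c) b
        - deriv (fun y => F a y c) b * deriv (fun x => H x b c) a = 0) :
    ∀ q p : ℝ → ℝ, ContDiff ℝ 1 q → ContDiff ℝ 1 p → ∀ t : ℝ,
      (deriv (fun x => F x (p t) t) (q t)
          * (deriv q t - deriv (fun y => H (q t) y t) (p t))
        + deriv (fun y => F (q t) y t) (p t)
          * (deriv p t + deriv (fun x => H x (p t) t) (q t))
        + deriv (fun s => - p s * deriv (fun y => F (q s) y s) (p s)) t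
      = deriv (fun s => F (q s) (p s) s
          - p s * deriv (fun y => F (q s) y s) (p s)) t)
      ∧ ((F (q t) (p t) t - p t * deriv (fun y => F (q t) y t) (p t))
          + p t * deriv (fun y => F (q t) y t) (p t)
        = F (q t) (p t) t) :=
  stmt_10_general H F hF hcons
end

section
/- Let m, g > 0, L ≥ 0, and E < 0 with m³g² > 2|E|L². Define r₋ = ( mg − √( (mg)² − 2|E|L²/m ) )/(2|E|), r₊ = ( mg + √( (mg)² − 2|E|L²/m ) )/(2|E|), and the Kepler period T = 2π·m^{3/2}·g/(2|E|)^{3/2}. Then (2/T)·∫_{r₋}^{r₊} √(2m|E|)·√( (r − r₋)(r₊ − r) )/r dr = 2|E| − 2√2·|E|^{3/2}·L/( m^{3/2}·g ). (This is the natural temperature k_B T(E, g) = ⟨p_r ṙ⟩ of the Kepler problem; for L = 0 it reduces to |E| = k_B T/2, the equipartition theorem for one-dimensional motion.) -/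
/-!
Substituting the turning points reduces the time average to the elementary integral
`∫_a^b √((x - a)(b - x)) / x dx = π ((a + b)/2 - √(ab))` for `0 ≤ a < b`, computed from an explicit
antiderivative. Since `r₋`, `r₊` are the roots of `2|E| r² - 2mg r + L²/m`, Vieta gives
`r₋ + r₊ = mg/|E|` and `√(r₋ r₊) = L/√(2m|E|)`, and what is left is algebra with the period `T`.
-/

open Real Set

lemma hasDerivAt_arcsin_of_one_sub_sq_eq {u : ℝ → ℝ} {u' c x : ℝ} (hu : HasDerivAt u u' x)
    (hc : 0 < c) (h : 1 - u x ^ 2 = c ^ 2) :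
    HasDerivAt (fun y => arcsin (u y)) (u' / c) x := by
  have hlt : u x ^ 2 < 1 := by nlinarith
  have hne₁ : u x ≠ -1 := fun h' => by rw [h'] at hlt; norm_num at hlt
  have hne₂ : u x ≠ 1 := fun h' => by rw [h'] at hlt; norm_num at hlt
  have := (hasDerivAt_arcsin hne₁ hne₂).comp x hu
  rwa [h, sqrt_sq hc.le, one_div_mul_eq_div] at this

section Primitive

variable {a b x : ℝ}

lemma hasDerivAt_sqrt_mul_sub (hx : x ∈ Ioo a b) :
    HasDerivAt (fun y => √((y - a) * (b - y)))
      ((a + b - 2 * x) / (2 * √((x - a) * (b - x)))) x := by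
  have hpos : 0 < (x - a) * (b - x) := mul_pos (sub_pos.2 hx.1) (sub_pos.2 hx.2)
  have hpoly : HasDerivAt (fun y => (y - a) * (b - y)) (a + b - 2 * x) x :=
    (((hasDerivAt_id' x).sub_const a).mul ((hasDerivAt_id' x).const_sub b)).congr_deriv (by ring)
  exact hpoly.sqrt hpos.ne'

lemma hasDerivAt_arcsin_affine (hx : x ∈ Ioo a b) :
    HasDerivAt (fun y => arcsin ((2 * y - (a + b)) / (b - a))) (1 / √((x - a) * (b - x))) x := by
  have hba : 0 < b - a := by linarith [hx.1, hx.2]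
  have hQ : 0 < (x - a) * (b - x) := mul_pos (sub_pos.2 hx.1) (sub_pos.2 hx.2)
  have hu : HasDerivAt (fun y => (2 * y - (a + b)) / (b - a)) (2 / (b - a)) x :=
    ((((hasDerivAt_id' x).const_mul 2).sub_const (a + b)).div_const (b - a)).congr_deriv (by ring)
  have hc : 0 < 2 * √((x - a) * (b - x)) / (b - a) := by positivity
  refine (hasDerivAt_arcsin_of_one_sub_sq_eq hu hc ?_).congr_deriv ?_
  · rw [div_pow, div_pow, mul_pow, sq_sqrt hQ.le]
    field_simp
    ring
  · field_simp

lemma hasDerivAt_arcsin_affine_inv (ha : 0 < a) (hx : x ∈ Ioo a b) :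
    HasDerivAt (fun y => arcsin (((a + b) * y - 2 * (a * b)) / ((b - a) * y)))
      (√(a * b) / (x * √((x - a) * (b - x)))) x := by
  have hba : 0 < b - a := by linarith [hx.1, hx.2]
  have hx0 : 0 < x := ha.trans hx.1
  have hQ : 0 < (x - a) * (b - x) := mul_pos (sub_pos.2 hx.1) (sub_pos.2 hx.2)
  have hab : 0 < a * b := mul_pos ha (by linarith [hx.2])
  have hu : HasDerivAt (fun y => ((a + b) * y - 2 * (a * b)) / ((b - a) * y))
      (2 * (a * b) / ((b - a) * x ^ 2)) x := by
    refine ((((hasDerivAt_id' x).const_mul (a + b)).sub_const (2 * (a * b))).div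
      ((hasDerivAt_id' x).const_mul (b - a)) (by positivity)).congr_deriv ?_
    field_simp
    ring
  have hc : 0 < 2 * √(a * b) * √((x - a) * (b - x)) / ((b - a) * x) := by positivity
  refine (hasDerivAt_arcsin_of_one_sub_sq_eq hu hc ?_).congr_deriv ?_
  · rw [div_pow, div_pow, mul_pow, mul_pow, mul_pow, sq_sqrt hab.le, sq_sqrt hQ.le]
    field_simp
    ring
  · field_simp
    rw [sq_sqrt hab.le]

-- Both arcsine arguments map `[a, b]` onto `[-1, 1]`, the first affinely in `x`,
-- the second affinely in `1/x`.
noncomputable def keplerPrimitive (a b x : ℝ) : ℝ :=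
  √((x - a) * (b - x)) + (a + b) / 2 * arcsin ((2 * x - (a + b)) / (b - a))
    - √(a * b) * arcsin (((a + b) * x - 2 * (a * b)) / ((b - a) * x))

lemma hasDerivAt_sqrt_mul_arcsin_affine_inv (ha : 0 ≤ a) (hx : x ∈ Ioo a b) :
    HasDerivAt (fun y => √(a * b) * arcsin (((a + b) * y - 2 * (a * b)) / ((b - a) * y)))
      (a * b / (x * √((x - a) * (b - x)))) x := by
  rcases ha.eq_or_lt with rfl | ha
  · simpa using hasDerivAt_const x (0 : ℝ)
  · have hab : 0 ≤ a * b := mul_nonneg ha.le (by linarith [hx.1, hx.2])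
    refine ((hasDerivAt_arcsin_affine_inv ha hx).const_mul _).congr_deriv ?_
    rw [← mul_div_assoc, mul_self_sqrt hab]

lemma hasDerivAt_keplerPrimitive (ha : 0 ≤ a) (hx : x ∈ Ioo a b) :
    HasDerivAt (keplerPrimitive a b) (√((x - a) * (b - x)) / x) x := by
  have hx0 : 0 < x := ha.trans_lt hx.1
  have hQ : 0 < (x - a) * (b - x) := mul_pos (sub_pos.2 hx.1) (sub_pos.2 hx.2)
  have hs : 0 < √((x - a) * (b - x)) := sqrt_pos.2 hQ
  refine (((hasDerivAt_sqrt_mul_sub hx).add ((hasDerivAt_arcsin_affine hx).const_mul _)).sub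
    (hasDerivAt_sqrt_mul_arcsin_affine_inv ha hx)).congr_deriv ?_
  field_simp
  linear_combination (-2) * sq_sqrt hQ.le

lemma continuousOn_keplerPrimitive (ha : 0 ≤ a) (hab : a < b) :
    ContinuousOn (keplerPrimitive a b) (Icc a b) := by
  refine ContinuousOn.sub (by fun_prop) ?_
  rcases ha.eq_or_lt with rfl | ha
  · simpa using continuousOn_const
  · refine continuousOn_const.mul (continuous_arcsin.comp_continuousOn
      (ContinuousOn.div (by fun_prop) (by fun_prop) fun y hy => ?_))
    have hy : 0 < y := ha.trans_le hy.1
    have hba : 0 < b - a := sub_pos.2 hab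
    positivity

lemma keplerPrimitive_apply_right (ha : 0 ≤ a) (hab : a < b) :
    keplerPrimitive a b b = (a + b) / 2 * (π / 2) - √(a * b) * (π / 2) := by
  have hba : b - a ≠ 0 := sub_ne_zero.2 hab.ne'
  have hb : b ≠ 0 := (ha.trans_lt hab).ne'
  have h₁ : (2 * b - (a + b)) / (b - a) = 1 := by rw [← div_self hba]; ring_nf
  have h₂ : ((a + b) * b - 2 * (a * b)) / ((b - a) * b) = 1 := by
    rw [← div_self (mul_ne_zero hba hb)]; ring_nf
  simp [keplerPrimitive, h₁, h₂]

lemma keplerPrimitive_apply_left (ha : 0 ≤ a) (hab : a < b) :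
    keplerPrimitive a b a = -((a + b) / 2 * (π / 2)) + √(a * b) * (π / 2) := by
  have hba : b - a ≠ 0 := sub_ne_zero.2 hab.ne'
  have h₁ : (2 * a - (a + b)) / (b - a) = -1 := by rw [← div_self hba]; ring
  rw [keplerPrimitive, h₁, arcsin_neg_one]
  rcases ha.eq_or_lt with rfl | ha
  · simp
  · have h₂ : ((a + b) * a - 2 * (a * b)) / ((b - a) * a) = -1 := by
      rw [← div_self (mul_ne_zero hba ha.ne')]; ring
    simp [h₂]

theorem integral_sqrt_mul_sub_div (ha : 0 ≤ a) (hab : a < b) :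
    ∫ x in a..b, √((x - a) * (b - x)) / x = π * ((a + b) / 2 - √(a * b)) := by
  have hderiv : ∀ x ∈ Ioo a b, HasDerivAt (keplerPrimitive a b) (√((x - a) * (b - x)) / x) x :=
    fun x hx => hasDerivAt_keplerPrimitive ha hx
  have hcont := continuousOn_keplerPrimitive ha hab
  -- a nonnegative derivative is automatically integrable, which covers the singularity at `a = 0`
  have hint : IntervalIntegrable (fun x => √((x - a) * (b - x)) / x) MeasureTheory.volume a b := by
    refine intervalIntegral.intervalIntegrable_deriv_of_nonneg (by rwa [uIcc_of_le hab.le])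
      (by simpa [hab.le] using hderiv) fun x hx => ?_
    simp only [min_eq_left hab.le, max_eq_right hab.le] at hx
    exact div_nonneg (sqrt_nonneg _) (ha.trans hx.1.le)
  rw [intervalIntegral.integral_eq_sub_of_hasDerivAt_of_le hab.le hcont hderiv hint,
    keplerPrimitive_apply_right ha hab, keplerPrimitive_apply_left ha hab]
  ring

end Primitive

lemma rpow_three_halves {x : ℝ} (hx : 0 ≤ x) : x ^ (3 / 2 : ℝ) = x * √x := by
  rw [show (3 / 2 : ℝ) = 1 + 1 / 2 by norm_num, rpow_add' hx (by norm_num), rpow_one,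
    sqrt_eq_rpow]

section TurningPoints

variable {m g e L : ℝ}

lemma kepler_disc_pos (hm : 0 < m) (hbound : 2 * e * L ^ 2 < m ^ 3 * g ^ 2) :
    0 < (m * g) ^ 2 - 2 * e * L ^ 2 / m := by
  rw [sub_pos, div_lt_iff₀ hm]
  linarith

lemma kepler_perihelion_nonneg (hm : 0 < m) (hg : 0 < g) (he : 0 < e) :
    0 ≤ (m * g - √((m * g) ^ 2 - 2 * e * L ^ 2 / m)) / (2 * e) := by
  have : √((m * g) ^ 2 - 2 * e * L ^ 2 / m) ≤ m * g :=
    (sqrt_le_sqrt (sub_le_self _ (by positivity))).trans (sqrt_sq (by positivity)).le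
  exact div_nonneg (by linarith) (by positivity)

lemma kepler_perihelion_lt_aphelion (hm : 0 < m) (he : 0 < e)
    (hbound : 2 * e * L ^ 2 < m ^ 3 * g ^ 2) :
    (m * g - √((m * g) ^ 2 - 2 * e * L ^ 2 / m)) / (2 * e)
      < (m * g + √((m * g) ^ 2 - 2 * e * L ^ 2 / m)) / (2 * e) := by
  have := sqrt_pos.2 (kepler_disc_pos hm hbound)
  gcongr
  linarith

lemma kepler_perihelion_add_aphelion (he : 0 < e) :
    (m * g - √((m * g) ^ 2 - 2 * e * L ^ 2 / m)) / (2 * e)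
      + (m * g + √((m * g) ^ 2 - 2 * e * L ^ 2 / m)) / (2 * e) = m * g / e := by
  field_simp
  ring

lemma sqrt_kepler_perihelion_mul_aphelion (hm : 0 < m) (he : 0 < e) (hL : 0 ≤ L)
    (hbound : 2 * e * L ^ 2 < m ^ 3 * g ^ 2) :
    √((m * g - √((m * g) ^ 2 - 2 * e * L ^ 2 / m)) / (2 * e)
      * ((m * g + √((m * g) ^ 2 - 2 * e * L ^ 2 / m)) / (2 * e))) = L / √(2 * m * e) := by
  have hprod : (m * g - √((m * g) ^ 2 - 2 * e * L ^ 2 / m)) / (2 * e)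
      * ((m * g + √((m * g) ^ 2 - 2 * e * L ^ 2 / m)) / (2 * e)) = (L / √(2 * m * e)) ^ 2 := by
    rw [div_pow, sq_sqrt (by positivity), div_mul_div_comm, mul_comm (m * g - _), ← sq_sub_sq,
      sq_sqrt (kepler_disc_pos hm hbound).le]
    field_simp
    ring
  rw [hprod, sqrt_sq (by positivity)]

end TurningPoints

/-- The natural temperature of the Kepler problem:
`k_B T(E, g) = (2/T)·∫_{r₋}^{r₊} √(2m|E|)·√((r−r₋)(r₊−r))/r dr
= 2|E| − 2√2·|E|^{3/2}·L/(m^{3/2}·g)`. -/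
theorem stmt_16
    (m g L E : ℝ) (hm : 0 < m) (hg : 0 < g) (hL : 0 ≤ L) (hE : E < 0)
    (hbound : 2 * |E| * L ^ 2 < m ^ 3 * g ^ 2)
    (rm rp T : ℝ)
    (hrm : rm = (m * g - Real.sqrt ((m * g) ^ 2 - 2 * |E| * L ^ 2 / m)) / (2 * |E|))
    (hrp : rp = (m * g + Real.sqrt ((m * g) ^ 2 - 2 * |E| * L ^ 2 / m)) / (2 * |E|))
    (hT : T = 2 * Real.pi * m ^ ((3:ℝ)/2) * g / (2 * |E|) ^ ((3:ℝ)/2)) :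
    (2 / T) *
      (∫ r in rm..rp, Real.sqrt (2 * m * |E|) * Real.sqrt ((r - rm) * (rp - r)) / r)
      = 2 * |E| - 2 * Real.sqrt 2 * |E| ^ ((3:ℝ)/2) * L / (m ^ ((3:ℝ)/2) * g) := by
  have he : 0 < |E| := abs_pos.2 hE.ne
  have hintegral : ∫ r in rm..rp, √((r - rm) * (rp - r)) / r
      = π * (m * g / |E| / 2 - L / √(2 * m * |E|)) := by
    subst hrm hrp
    rw [integral_sqrt_mul_sub_div (kepler_perihelion_nonneg hm hg he)
      (kepler_perihelion_lt_aphelion hm he hbound), kepler_perihelion_add_aphelion he,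
      sqrt_kepler_perihelion_mul_aphelion hm he hL hbound]
  simp_rw [mul_div_assoc, intervalIntegral.integral_const_mul, hintegral, hT,
    rpow_three_halves hm.le, rpow_three_halves he.le,
    rpow_three_halves (by positivity : (0:ℝ) ≤ 2 * |E|), sqrt_mul' _ he.le, sqrt_mul' _ hm.le]
  field_simp
  linear_combination m * √m * g * (√|E| ^ 2 * sq_sqrt zero_le_two + 2 * sq_sqrt he.le)
end

section
/- Let 0 < α ≤ β be real numbers. Then ∫_α^β √( (x − α)(β − x) )/x dx = π·( (α + β)/2 − √(αβ) ). -/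
/-!
The integrand has the elementary primitive
`√((x - α)(β - x)) + (α + β)/2 · arcsin u(x) - √(αβ) · arcsin v(x)` with
`u(x) = (2x - α - β)/(β - α)` and `v(x) = ((α + β)x - 2αβ)/((β - α)x)`.
The identities `1 - u² = (2√((x - α)(β - x))/(β - α))²` and
`1 - v² = (2√(αβ)√((x - α)(β - x))/((β - α)x))²` make its derivative collapse to the integrand.
Both `u` and `v` run from `-1` at `x = α` to `1` at `x = β`, so each arcsin term contributes
`π` times its coefficient.
-/

open Real Set

theorem HasDerivAt.arcsin_of_one_sub_sq_eq_sq {f : ℝ → ℝ} {f' w x : ℝ}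
    (hf : HasDerivAt f f' x) (hw : 0 < w) (h : 1 - f x ^ 2 = w ^ 2) :
    HasDerivAt (fun y => arcsin (f y)) (f' / w) x := by
  have hne : ∀ s : ℝ, s ^ 2 = 1 → f x ≠ s := by
    rintro s hs rfl
    nlinarith
  have hsqrt : √(1 - f x ^ 2) = w := by rw [h, sqrt_sq hw.le]
  have h := (hasDerivAt_arcsin (hne (-1) (by norm_num)) (hne 1 (by norm_num))).comp x hf
  rw [hsqrt] at h
  exact h.congr_deriv (by ring)

namespace Kepler

variable {α β x : ℝ}

noncomputable def radialPrimitive (α β x : ℝ) : ℝ :=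
  √((x - α) * (β - x)) + (α + β) / 2 * arcsin ((2 * x - α - β) / (β - α))
    - √(α * β) * arcsin (((α + β) * x - 2 * α * β) / ((β - α) * x))

theorem continuousOn_radialPrimitive (h0 : 0 < α) (hαβ : α < β) :
    ContinuousOn (radialPrimitive α β) (Icc α β) := by
  have hden : ∀ y ∈ Icc α β, (β - α) * y ≠ 0 := fun y hy =>
    mul_ne_zero (sub_pos.mpr hαβ).ne' (h0.trans_le hy.1).ne'
  unfold radialPrimitive
  exact ((continuous_sqrt.comp (by fun_prop)).continuousOn.add
    (continuous_const.mul (continuous_arcsin.comp (by fun_prop))).continuousOn).sub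
    (continuousOn_const.mul (continuous_arcsin.comp_continuousOn
      ((by fun_prop : ContinuousOn (fun y => (α + β) * y - 2 * α * β) _).div
        (by fun_prop) hden)))

theorem hasDerivAt_radialPrimitive (h0 : 0 < α) (hx : x ∈ Ioo α β) :
    HasDerivAt (radialPrimitive α β) (√((x - α) * (β - x)) / x) x := by
  obtain ⟨hxα, hxβ⟩ := hx
  have hs : 0 < β - α := by linarith
  have hx0 : 0 < x := h0.trans hxα
  have hP : 0 < (x - α) * (β - x) := mul_pos (sub_pos.mpr hxα) (sub_pos.mpr hxβ)
  set f := √((x - α) * (β - x))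
  have hf : 0 < f := sqrt_pos.mpr hP
  have hf2 : f ^ 2 = (x - α) * (β - x) := sq_sqrt hP.le
  set g := √(α * β)
  have hg : 0 < g := sqrt_pos.mpr (by nlinarith)
  have hg2 : g ^ 2 = α * β := sq_sqrt (by nlinarith)
  have hquad : HasDerivAt (fun y => (y - α) * (β - y)) (α + β - 2 * x) x :=
    ((hasDerivAt_id' x).sub_const α).mul ((hasDerivAt_id' x).const_sub β)
      |>.congr_deriv (by ring)
  have hsqrt : HasDerivAt (fun y => √((y - α) * (β - y))) ((α + β - 2 * x) / (2 * f)) x :=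
    hquad.sqrt hP.ne'
  have harcsin_u : HasDerivAt (fun y => arcsin ((2 * y - α - β) / (β - α)))
      ((2 / (β - α)) / (2 * f / (β - α))) x := by
    refine HasDerivAt.arcsin_of_one_sub_sq_eq_sq ?_ (by positivity) ?_
    · simpa using ((((hasDerivAt_id x).const_mul 2).sub_const α).sub_const β).div_const (β - α)
    · field_simp
      linear_combination (-4 : ℝ) * hf2
  have harcsin_v : HasDerivAt (fun y => arcsin (((α + β) * y - 2 * α * β) / ((β - α) * y)))
      ((2 * α * β / ((β - α) * x ^ 2)) / (2 * g * f / ((β - α) * x))) x := by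
    refine HasDerivAt.arcsin_of_one_sub_sq_eq_sq ?_ (by positivity) ?_
    · refine (((hasDerivAt_id' x).const_mul (α + β)).sub_const (2 * α * β)).div
        ((hasDerivAt_id' x).const_mul (β - α)) (by positivity) |>.congr_deriv ?_
      field_simp
      ring
    · field_simp
      linear_combination (-4 * f ^ 2) * hg2 + (-4 * (α * β)) * hf2
  refine (hsqrt.add (harcsin_u.const_mul ((α + β) / 2))).sub
    (harcsin_v.const_mul g) |>.congr_deriv ?_
  field_simp
  linear_combination -2 * hf2

theorem radialPrimitive_sub (h0 : 0 < α) (hαβ : α < β) :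
    radialPrimitive α β β - radialPrimitive α β α = π * ((α + β) / 2 - √(α * β)) := by
  have hs : β - α ≠ 0 := (sub_pos.mpr hαβ).ne'
  have hu_right : (2 * β - α - β) / (β - α) = 1 := by
    rw [show 2 * β - α - β = β - α by ring, div_self hs]
  have hu_left : (2 * α - α - β) / (β - α) = -1 := by
    rw [show 2 * α - α - β = -(β - α) by ring, neg_div, div_self hs]
  have hv_right : ((α + β) * β - 2 * α * β) / ((β - α) * β) = 1 := by
    rw [show (α + β) * β - 2 * α * β = (β - α) * β by ring,
      div_self (mul_ne_zero hs (h0.trans hαβ).ne')]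
  have hv_left : ((α + β) * α - 2 * α * β) / ((β - α) * α) = -1 := by
    rw [show (α + β) * α - 2 * α * β = -((β - α) * α) by ring, neg_div,
      div_self (mul_ne_zero hs h0.ne')]
  simp only [radialPrimitive, hu_right, hu_left, hv_right, hv_left, arcsin_one, arcsin_neg_one,
    sub_self, mul_zero, zero_mul, sqrt_zero]
  ring

theorem integral_sqrt_div_of_lt (h0 : 0 < α) (hαβ : α < β) :
    ∫ x in α..β, √((x - α) * (β - x)) / x = π * ((α + β) / 2 - √(α * β)) := by
  have hintegrable :
      IntervalIntegrable (fun x => √((x - α) * (β - x)) / x) MeasureTheory.volume α β :=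
    ((continuous_sqrt.comp (by fun_prop)).continuousOn.div continuousOn_id fun y hy =>
      (h0.trans_le (uIcc_of_le hαβ.le ▸ hy).1).ne').intervalIntegrable
  rw [intervalIntegral.integral_eq_sub_of_hasDerivAt_of_le hαβ.le
    (continuousOn_radialPrimitive h0 hαβ) (fun x hx => hasDerivAt_radialPrimitive h0 hx)
    hintegrable, radialPrimitive_sub h0 hαβ]

end Kepler

/-- The definite integral underlying the Kepler adiabatic invariant and
temperature: for `0 < α ≤ β`,
`∫_α^β √((x − α)(β − x))/x dx = π((α + β)/2 − √(αβ))`. -/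
theorem stmt_17
    (α β : ℝ) (h0 : 0 < α) (hαβ : α ≤ β) :
    (∫ x in α..β, Real.sqrt ((x - α) * (β - x)) / x)
      = Real.pi * ((α + β) / 2 - Real.sqrt (α * β)) := by
  rcases hαβ.eq_or_lt with rfl | hlt
  · simp [sqrt_mul_self h0.le]
  · exact Kepler.integral_sqrt_div_of_lt h0 hlt
end
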